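/- Let n and Δ be positive integers with Δ < ⌊n/2⌋, and let P be any (3,Δ)-packing of K_n. Then |P| < n(n−1)/(6(Δ+1)) + ((2·ln 2 − 1)/3)·n + n/(3(Δ+1)). -/

import Mathlib

/-- Cyclic cross-correlation of two sequences `X, Y : ZMod n → ℕ` at shift `τ`:
`Σ_{i=0}^{n-1} X(i) * (R^τ Y)(i)` where `(R^τ Y)(i) = Y(i - τ)`. -/
def corr (n : ℕ) (X Y : ZMod n → ℕ) (τ : ℕ) : ℕ :=
  ∑ i ∈ Finset.range n, X (i : ZMod n) * Y ((i : ZMod n) - (τ : ZMod n))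

/-- Hamming cross-correlation with respect to `Δ`:
`H_Δ(X,Y) = max_{0 ≤ τ ≤ Δ} Σ_i X(i) (R^τ Y)(i)`. -/
def Hcorr (n Δ : ℕ) (X Y : ZMod n → ℕ) : ℕ :=
  (Finset.range (Δ + 1)).sup (corr n X Y)

/-- Characteristic set `I_X = {t ∈ Z_n : X(t) = 1}` (as a finite set). -/
def Iset (n : ℕ) (X : ZMod n → ℕ) : Finset (ZMod n) :=
  ((Finset.range n).image (fun (i : ℕ) => (i : ZMod n))).filter (fun t => X t = 1)

/-- `X` is a binary sequence of length `n` and weight `k`, i.e. `X ∈ S(n,k)`. -/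
def IsSeq (n k : ℕ) (X : ZMod n → ℕ) : Prop :=
  (∀ i, X i = 0 ∨ X i = 1) ∧ (Iset n X).card = k

/-- Edge set `E_Δ(A)` of the supporting graph `G_Δ(A)`: all unordered pairs
`{a+τ, b+τ}` (mod `n`) with `a, b ∈ A`, `a ≠ b`, `0 ≤ τ ≤ Δ`. -/
def Eset (n Δ : ℕ) (A : Finset (ZMod n)) : Set (Sym2 (ZMod n)) :=
  {e | ∃ a ∈ A, ∃ b ∈ A, a ≠ b ∧ ∃ τ : ℕ, τ ≤ Δ ∧ e = s(a + (τ : ZMod n), b + (τ : ZMod n))}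

/-- `P` is a `(k,Δ)`-packing of `K_n`: a family of `k`-subsets of `Z_n` whose
supporting graphs are pairwise edge-disjoint. -/
def IsPacking (n k Δ : ℕ) (P : Finset (Finset (ZMod n))) : Prop :=
  (∀ A ∈ P, A.card = k) ∧
  ∀ A ∈ P, ∀ B ∈ P, A ≠ B → Eset n Δ A ∩ Eset n Δ B = ∅

namespace TPB

variable {n : ℕ}

/-- circular distance of a difference -/
def dstar (n : ℕ) (d : ZMod n) : ℕ := min d.val (n - d.val)

def arc (Δ : ℕ) (a : ZMod n) : Finset (ZMod n) :=
  (Finset.range (Δ + 1)).image (fun τ : ℕ => a + (τ : ZMod n))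

lemma mem_arc {Δ : ℕ} {a x : ZMod n} : x ∈ arc Δ a ↔ ∃ τ ≤ Δ, x = a + (τ : ZMod n) := by
  simp only [arc, Finset.mem_image, Finset.mem_range, Nat.lt_succ_iff]
  constructor
  · rintro ⟨τ, h1, rfl⟩; exact ⟨τ, h1, rfl⟩
  · rintro ⟨τ, h1, rfl⟩; exact ⟨τ, h1, rfl⟩

lemma mem_arc_iff_val [NeZero n] {Δ : ℕ} (hΔ : Δ < n) {a x : ZMod n} :
    x ∈ arc Δ a ↔ (x - a).val ≤ Δ := by
  rw [mem_arc]
  constructor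
  · rintro ⟨τ, hτ, rfl⟩
    rw [add_sub_cancel_left, ZMod.val_natCast_of_lt (lt_of_le_of_lt hτ hΔ)]
    exact hτ
  · intro h
    exact ⟨(x - a).val, h, by rw [ZMod.natCast_zmod_val]; ring⟩

lemma card_arc [NeZero n] {Δ : ℕ} (hΔ : Δ < n) (a : ZMod n) : (arc Δ a).card = Δ + 1 := by
  rw [arc, Finset.card_image_of_injOn, Finset.card_range]
  intro σ hσ τ hτ h
  simp only [Finset.coe_range, Set.mem_Iio] at hσ hτ
  have h2 : (σ : ZMod n) = (τ : ZMod n) := by exact add_left_cancel h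
  have h3 := congrArg ZMod.val h2
  rwa [ZMod.val_natCast_of_lt (by omega), ZMod.val_natCast_of_lt (by omega)] at h3

lemma val_sub_cast [NeZero n] {Δ σ τ : ℕ} (h2 : 2 * (Δ + 1) ≤ n) (hσ : σ ≤ Δ) (hτ : τ ≤ Δ) :
    ((σ : ZMod n) - (τ : ZMod n)).val = if τ ≤ σ then σ - τ else n - (τ - σ) := by
  split_ifs with h
  · have e : (σ : ZMod n) - (τ : ZMod n) = ((σ - τ : ℕ) : ZMod n) := by
      rw [Nat.cast_sub h]
    rw [e, ZMod.val_natCast_of_lt (by omega)]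
  · have e : (σ : ZMod n) - (τ : ZMod n) = -(((τ - σ : ℕ) : ZMod n)) := by
      rw [Nat.cast_sub (by omega)]; ring
    have hz : ((τ - σ : ℕ) : ZMod n) ≠ 0 := by
      intro hz
      have h3 := congrArg ZMod.val hz
      rw [ZMod.val_natCast_of_lt (by omega), ZMod.val_zero] at h3; omega
    haveI : NeZero ((τ - σ : ℕ) : ZMod n) := ⟨hz⟩
    rw [e, ZMod.val_neg_of_ne_zero, ZMod.val_natCast_of_lt (by omega)]

lemma arc_inter_bound [NeZero n] {Δ : ℕ} (h2 : 2 * (Δ + 1) ≤ n) {a b : ZMod n} (hab : a ≠ b) :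
    (arc Δ a ∩ arc Δ b).card + min (dstar n (b - a)) (Δ + 1) ≤ Δ + 1 := by
  have hd : b - a ≠ 0 := sub_ne_zero.mpr (Ne.symm hab)
  have hvlt : (b - a).val < n := ZMod.val_lt _
  have hv0 : (b - a).val ≠ 0 := fun h => hd ((ZMod.val_eq_zero _).mp h)
  have key : ∀ x ∈ arc Δ a ∩ arc Δ b, ∃ σ ≤ Δ, ∃ τ ≤ Δ, x = a + (σ : ZMod n) ∧
      x = b + (τ : ZMod n) ∧ (b - a).val = if τ ≤ σ then σ - τ else n - (τ - σ) := by
    intro x hx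
    rw [Finset.mem_inter, mem_arc, mem_arc] at hx
    obtain ⟨⟨σ, hσ, hxa⟩, ⟨τ, hτ, hxb⟩⟩ := hx
    refine ⟨σ, hσ, τ, hτ, hxa, hxb, ?_⟩
    have e : b - a = (σ : ZMod n) - (τ : ZMod n) := by linear_combination hxa - hxb
    rw [e, val_sub_cast h2 hσ hτ]
  rw [dstar]
  by_cases hsmall : Δ < min (b - a).val (n - (b - a).val)
  · have he : arc Δ a ∩ arc Δ b = ∅ := by
      rw [Finset.eq_empty_iff_forall_notMem]
      intro x hx
      obtain ⟨σ, hσ, τ, hτ, _, _, hval⟩ := key x hx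
      split_ifs at hval <;> omega
    rw [he, Finset.card_empty]; omega
  · push_neg at hsmall
    rcases le_or_gt (b - a).val (n - (b - a).val) with hle | hlt
    · have hdΔ : (b - a).val ≤ Δ := by omega
      have hsub : arc Δ a ∩ arc Δ b ⊆ arc (Δ - (b - a).val) b := by
        intro x hx
        obtain ⟨σ, hσ, τ, hτ, _, hxb, hval⟩ := key x hx
        rw [mem_arc]
        refine ⟨τ, ?_, hxb⟩
        split_ifs at hval <;> omega
      have hc := Finset.card_le_card hsub
      rw [card_arc (by omega) b] at hc
      omega
    · have hdΔ : n - (b - a).val ≤ Δ := by omega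
      have hsub : arc Δ a ∩ arc Δ b ⊆ arc (Δ - (n - (b - a).val)) a := by
        intro x hx
        obtain ⟨σ, hσ, τ, hτ, hxa, _, hval⟩ := key x hx
        rw [mem_arc]
        refine ⟨σ, ?_, hxa⟩
        split_ifs at hval <;> omega
      have hc := Finset.card_le_card hsub
      rw [card_arc (by omega) a] at hc
      omega

lemma arc_union_bound [NeZero n] {Δ : ℕ} (h2 : 2 * (Δ + 1) ≤ n) {a b : ZMod n} (hab : a ≠ b) :
    Δ + 1 + min (dstar n (b - a)) (Δ + 1) ≤ (arc Δ a ∪ arc Δ b).card := by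
  have h1 := arc_inter_bound h2 hab
  have h3 := Finset.card_union_add_card_inter (arc Δ a) (arc Δ b)
  rw [card_arc (by omega) a, card_arc (by omega) b] at h3
  omega

lemma arc_disjoint [NeZero n] {Δ : ℕ} (h2 : 2 * (Δ + 1) ≤ n) {a b : ZMod n} (hab : a ≠ b)
    (hfar : Δ + 1 ≤ dstar n (b - a)) : Disjoint (arc Δ a) (arc Δ b) := by
  have h1 := arc_inter_bound h2 hab
  rw [Finset.disjoint_iff_inter_eq_empty, ← Finset.card_eq_zero]
  omega

lemma dstar_neg [NeZero n] {d : ZMod n} (hd : d ≠ 0) : dstar n (-d) = dstar n d := by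
  haveI : NeZero d := ⟨hd⟩
  have h1 : (-d).val = n - d.val := ZMod.val_neg_of_ne_zero d
  have h2 : d.val < n := ZMod.val_lt d
  have h3 : d.val ≠ 0 := fun h => hd ((ZMod.val_eq_zero _).mp h)
  rw [dstar, dstar, h1]
  omega

end TPB

namespace TPB2
open TPB
variable {n : ℕ}

def pe (Δ : ℕ) (a g : ZMod n) : Finset (Sym2 (ZMod n)) :=
  (arc Δ a).image (fun x => s(x, x + g))

lemma mem_pe {Δ : ℕ} {a g : ZMod n} {e : Sym2 (ZMod n)} :
    e ∈ pe Δ a g ↔ ∃ τ ≤ Δ, e = s(a + (τ : ZMod n), a + g + (τ : ZMod n)) := by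
  simp only [pe, Finset.mem_image, mem_arc]
  constructor
  · rintro ⟨x, ⟨τ, hτ, rfl⟩, rfl⟩
    exact ⟨τ, hτ, by rw [add_right_comm]⟩
  · rintro ⟨τ, hτ, rfl⟩
    exact ⟨a + τ, ⟨τ, hτ, rfl⟩, by rw [add_right_comm]⟩

lemma mem_pe_pair {Δ : ℕ} {u v : ZMod n} {e : Sym2 (ZMod n)} :
    e ∈ pe Δ u (v - u) ↔ ∃ τ ≤ Δ, e = s(u + (τ : ZMod n), v + (τ : ZMod n)) := by
  rw [mem_pe]
  have h : u + (v - u) = v := by ring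
  rw [h]

def cls [NeZero n] (g : ZMod n) : Finset (Sym2 (ZMod n)) :=
  Finset.univ.image (fun x => s(x, x + g))

lemma mem_cls [NeZero n] {g : ZMod n} {e : Sym2 (ZMod n)} : e ∈ cls g ↔ ∃ x, e = s(x, x + g) := by
  simp only [cls, Finset.mem_image, Finset.mem_univ, true_and]
  constructor
  · rintro ⟨x, rfl⟩; exact ⟨x, rfl⟩
  · rintro ⟨x, rfl⟩; exact ⟨x, rfl⟩

lemma cls_card_le [NeZero n] (g : ZMod n) : (cls g).card ≤ n :=
  le_trans Finset.card_image_le (by rw [Finset.card_univ, ZMod.card])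

lemma cls_neg [NeZero n] (g : ZMod n) : cls (-g) = cls g := by
  ext e
  rw [mem_cls, mem_cls]
  constructor
  · rintro ⟨x, rfl⟩
    refine ⟨x + -g, ?_⟩
    rw [Sym2.eq_iff]
    right; exact ⟨by ring, rfl⟩
  · rintro ⟨x, rfl⟩
    refine ⟨x + g, ?_⟩
    rw [Sym2.eq_iff]
    right; exact ⟨by ring, rfl⟩

lemma cls_disjoint [NeZero n] {g h : ZMod n} (h1 : g ≠ h) (h2 : g ≠ -h) :
    Disjoint (cls g) (cls h) := by
  rw [Finset.disjoint_left]
  rintro e heg heh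
  rw [mem_cls] at heg heh
  obtain ⟨x, rfl⟩ := heg
  obtain ⟨y, hy⟩ := heh
  rw [Sym2.eq_iff] at hy
  rcases hy with ⟨h3, h4⟩ | ⟨h3, h4⟩
  · subst h3; exact h1 (add_left_cancel h4)
  · exact h2 (by linear_combination h4 - h3)

lemma pe_subset_cls [NeZero n] {Δ : ℕ} (a g : ZMod n) : pe Δ a g ⊆ cls g := by
  intro e he
  rw [mem_pe] at he
  obtain ⟨τ, _, rfl⟩ := he
  rw [mem_cls]
  exact ⟨a + τ, by rw [add_right_comm a g τ]⟩

lemma phi_inj {g : ZMod n} (hg : g + g ≠ 0) :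
    Function.Injective (fun x : ZMod n => s(x, x + g)) := by
  intro x y hxy
  simp only [Sym2.eq_iff] at hxy
  rcases hxy with ⟨h1, _⟩ | ⟨h1, h2⟩
  · exact h1
  · exact absurd (by linear_combination h2 - h1 : g + g = 0) hg

lemma pe_card [NeZero n] {Δ : ℕ} (h2 : 2 * (Δ + 1) ≤ n) {g : ZMod n} (hg : g ≠ 0) (a : ZMod n) :
    (pe Δ a g).card = Δ + 1 := by
  rw [pe, Finset.card_image_of_injOn, card_arc (by omega) a]
  intro x hx y hy hxy
  simp only [Sym2.eq_iff] at hxy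
  rcases hxy with ⟨h1, _⟩ | ⟨h1, h2'⟩
  · exact h1
  · exfalso
    rw [Finset.mem_coe, mem_arc] at hx hy
    obtain ⟨σ, hσ, rfl⟩ := hx
    obtain ⟨τ, hτ, rfl⟩ := hy
    have e1 : g = (σ : ZMod n) - (τ : ZMod n) := by linear_combination -h1
    have e2 : g = (τ : ZMod n) - (σ : ZMod n) := by linear_combination h2'
    have v1 := congrArg ZMod.val e1
    have v2 := congrArg ZMod.val e2
    rw [val_sub_cast h2 hσ hτ] at v1
    rw [val_sub_cast h2 hτ hσ] at v2
    have hg0 : g.val ≠ 0 := fun h => hg ((ZMod.val_eq_zero _).mp h)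
    have hlt := ZMod.val_lt g
    split_ifs at v1 <;> split_ifs at v2 <;> omega

end TPB2

namespace TPB3
open TPB TPB2
variable {n : ℕ}

noncomputable def EF [NeZero n] (Δ : ℕ) (A : Finset (ZMod n)) : Finset (Sym2 (ZMod n)) :=
  (Set.toFinite (Eset n Δ A)).toFinset

lemma mem_EF [NeZero n] {Δ : ℕ} {A : Finset (ZMod n)} {e : Sym2 (ZMod n)} :
    e ∈ EF Δ A ↔ ∃ a ∈ A, ∃ b ∈ A, a ≠ b ∧ ∃ τ : ℕ, τ ≤ Δ ∧
      e = s(a + (τ : ZMod n), b + (τ : ZMod n)) := by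
  rw [EF, Set.Finite.mem_toFinset]; rfl

lemma EF_disjoint [NeZero n] {Δ : ℕ} {A B : Finset (ZMod n)}
    (h : Eset n Δ A ∩ Eset n Δ B = ∅) : Disjoint (EF Δ A) (EF Δ B) := by
  rw [Finset.disjoint_left]
  intro e hA hB
  have he : e ∈ Eset n Δ A ∩ Eset n Δ B :=
    ⟨(Set.Finite.mem_toFinset _).mp hA, (Set.Finite.mem_toFinset _).mp hB⟩
  rw [h] at he
  exact he

lemma EF_triple [NeZero n] {Δ : ℕ} {a b c : ZMod n} (hab : a ≠ b) (hac : a ≠ c) (hbc : b ≠ c) :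
    EF Δ ({a, b, c} : Finset (ZMod n)) = pe Δ a (b - a) ∪ pe Δ b (c - b) ∪ pe Δ a (c - a) := by
  ext e
  simp only [mem_EF, Finset.mem_union, Finset.mem_insert, Finset.mem_singleton, mem_pe_pair]
  constructor
  · rintro ⟨u, hu, v, hv, huv, τ, hτ, rfl⟩
    rcases hu with rfl | rfl | rfl <;> rcases hv with rfl | rfl | rfl
    · exact absurd rfl huv
    · exact Or.inl (Or.inl ⟨τ, hτ, rfl⟩)
    · exact Or.inr ⟨τ, hτ, rfl⟩
    · exact Or.inl (Or.inl ⟨τ, hτ, Sym2.eq_swap⟩)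
    · exact absurd rfl huv
    · exact Or.inl (Or.inr ⟨τ, hτ, rfl⟩)
    · exact Or.inr ⟨τ, hτ, Sym2.eq_swap⟩
    · exact Or.inl (Or.inr ⟨τ, hτ, Sym2.eq_swap⟩)
    · exact absurd rfl huv
  · rintro ((⟨τ, hτ, rfl⟩ | ⟨τ, hτ, rfl⟩) | ⟨τ, hτ, rfl⟩)
    · exact ⟨a, Or.inl rfl, b, Or.inr (Or.inl rfl), hab, τ, hτ, rfl⟩
    · exact ⟨b, Or.inr (Or.inl rfl), c, Or.inr (Or.inr rfl), hbc, τ, hτ, rfl⟩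
    · exact ⟨a, Or.inl rfl, c, Or.inr (Or.inr rfl), hac, τ, hτ, rfl⟩

lemma EF_nondiag [NeZero n] {Δ : ℕ} {A : Finset (ZMod n)} :
    EF Δ A ⊆ Finset.univ.filter (fun e : Sym2 (ZMod n) => ¬ e.IsDiag) := by
  intro e he
  rw [mem_EF] at he
  obtain ⟨a, _, b, _, hab, τ, _, rfl⟩ := he
  simp only [Finset.mem_filter, Finset.mem_univ, true_and, Sym2.mk_isDiag_iff]
  intro h
  exact hab (add_right_cancel h)

end TPB3

namespace TPB4
open TPB TPB2 TPB3
variable {n : ℕ}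

lemma ap_class_card [NeZero n] {Δ : ℕ} (h2 : 2 * (Δ + 1) ≤ n) {h : ZMod n}
    (hh : h ≠ 0) (hhh : h + h ≠ 0) (a : ZMod n) :
    (Δ + 1 + min (dstar n h) (Δ + 1) ≤ (pe Δ a h ∪ pe Δ (a + h) h).card) ∧
    pe Δ a h ∪ pe Δ (a + h) h ⊆ cls h := by
  constructor
  · have himg : pe Δ a h ∪ pe Δ (a + h) h
        = (arc Δ a ∪ arc Δ (a + h)).image (fun x => s(x, x + h)) := by
      rw [pe, pe, Finset.image_union]
    rw [himg, Finset.card_image_of_injective _ (phi_inj hhh)]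
    have hne : a ≠ a + h := fun hq => hh (by linear_combination -hq)
    have hb := arc_union_bound h2 hne
    rwa [add_sub_cancel_left] at hb
  · exact Finset.union_subset (pe_subset_cls a h) (pe_subset_cls (a + h) h)

lemma ap_total_card [NeZero n] {Δ : ℕ} (h2 : 2 * (Δ + 1) ≤ n) {h : ZMod n}
    (hh : h ≠ 0) (h2h : h + h ≠ 0) (h3h : h + h + h ≠ 0) (a : ZMod n) :
    2 * (Δ + 1) + min (dstar n h) (Δ + 1)
      ≤ (EF Δ ({a, a + h, a + h + h} : Finset (ZMod n))).card := by
  have hab : a ≠ a + h := fun hq => hh (by linear_combination -hq)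
  have hac : a ≠ a + h + h := fun hq => h2h (by linear_combination -hq)
  have hbc : a + h ≠ a + h + h := fun hq => hh (by linear_combination -hq)
  rw [EF_triple hab hac hbc]
  have e1 : a + h - a = h := by ring
  have e2 : a + h + h - (a + h) = h := by ring
  have e3 : a + h + h - a = h + h := by ring
  rw [e1, e2, e3]
  obtain ⟨hcard, hsub⟩ := ap_class_card h2 hh h2h a
  have hdisj : Disjoint (pe Δ a h ∪ pe Δ (a + h) h) (pe Δ a (h + h)) := by
    apply Finset.disjoint_of_subset_left hsub
    apply Finset.disjoint_of_subset_right (pe_subset_cls a (h + h))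
    apply cls_disjoint
    · intro hq; exact hh (by linear_combination -hq)
    · intro hq; exact h3h (by linear_combination hq)
  rw [Finset.card_union_of_disjoint hdisj]
  have hpc := pe_card h2 h2h a
  omega

lemma budget_card [NeZero n] {Δ : ℕ} (h2 : 2 * (Δ + 1) ≤ n) {g : ℕ}
    (hg1 : 1 ≤ g) (hgΔ : g ≤ Δ) (a : ZMod n) :
    Δ + 1 + g ≤ ((EF Δ ({a, a + (g : ZMod n), a + (g : ZMod n) + (g : ZMod n)} : Finset (ZMod n)))
      ∩ cls ((g : ZMod n))).card := by
  have hvg : ((g : ZMod n)).val = g := ZMod.val_natCast_of_lt (by omega)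
  have hg0 : (g : ZMod n) ≠ 0 := by
    intro hq
    have h3 := congrArg ZMod.val hq
    rw [hvg, ZMod.val_zero] at h3; omega
  have hg2 : (g : ZMod n) + (g : ZMod n) ≠ 0 := by
    have e : (g : ZMod n) + (g : ZMod n) = ((2 * g : ℕ) : ZMod n) := by push_cast; ring
    rw [e]
    intro hq
    have h3 := congrArg ZMod.val hq
    rw [ZMod.val_natCast_of_lt (by omega), ZMod.val_zero] at h3; omega
  have hdstar : dstar n ((g : ZMod n)) = g := by rw [dstar, hvg]; omega
  obtain ⟨hcard, hsub⟩ := ap_class_card h2 hg0 hg2 a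
  have hab : a ≠ a + (g : ZMod n) := fun hq => hg0 (by linear_combination -hq)
  have hac : a ≠ a + (g : ZMod n) + (g : ZMod n) := fun hq => hg2 (by linear_combination -hq)
  have hbc : a + (g : ZMod n) ≠ a + (g : ZMod n) + (g : ZMod n) :=
    fun hq => hg0 (by linear_combination -hq)
  have hEsub : pe Δ a ((g : ZMod n)) ∪ pe Δ (a + (g : ZMod n)) ((g : ZMod n)) ⊆
      EF Δ ({a, a + (g : ZMod n), a + (g : ZMod n) + (g : ZMod n)} : Finset (ZMod n))
        ∩ cls ((g : ZMod n)) := by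
    intro e he
    rw [Finset.mem_inter]
    refine ⟨?_, hsub he⟩
    rw [EF_triple hab hac hbc]
    have e1 : a + (g : ZMod n) - a = (g : ZMod n) := by ring
    have e2 : a + (g : ZMod n) + (g : ZMod n) - (a + (g : ZMod n)) = (g : ZMod n) := by ring
    rw [e1, e2]
    exact Finset.mem_union_left _ he
  have hc := Finset.card_le_card hEsub
  rw [hdstar] at hcard
  omega

lemma generic_card [NeZero n] {Δ : ℕ} (h2 : 2 * (Δ + 1) ≤ n) {a b c : ZMod n}
    (hab : a ≠ b) (hac : a ≠ c) (hbc : b ≠ c)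
    (h12 : b - a ≠ c - b) (h12' : b - a ≠ -(c - b))
    (h13 : b - a ≠ c - a) (h13' : b - a ≠ -(c - a))
    (h23 : c - b ≠ c - a) (h23' : c - b ≠ -(c - a)) :
    3 * (Δ + 1) ≤ (EF Δ ({a, b, c} : Finset (ZMod n))).card := by
  rw [EF_triple hab hac hbc]
  have d1 : b - a ≠ 0 := sub_ne_zero.mpr (Ne.symm hab)
  have d2 : c - b ≠ 0 := sub_ne_zero.mpr (Ne.symm hbc)
  have d3 : c - a ≠ 0 := sub_ne_zero.mpr (Ne.symm hac)
  have dis12 : Disjoint (pe Δ a (b - a)) (pe Δ b (c - b)) :=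
    Finset.disjoint_of_subset_left (pe_subset_cls _ _)
      (Finset.disjoint_of_subset_right (pe_subset_cls _ _) (cls_disjoint h12 h12'))
  have dis13 : Disjoint (pe Δ a (b - a)) (pe Δ a (c - a)) :=
    Finset.disjoint_of_subset_left (pe_subset_cls _ _)
      (Finset.disjoint_of_subset_right (pe_subset_cls _ _) (cls_disjoint h13 h13'))
  have dis23 : Disjoint (pe Δ b (c - b)) (pe Δ a (c - a)) :=
    Finset.disjoint_of_subset_left (pe_subset_cls _ _)
      (Finset.disjoint_of_subset_right (pe_subset_cls _ _) (cls_disjoint h23 h23'))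
  rw [Finset.card_union_of_disjoint (Finset.disjoint_union_left.mpr ⟨dis13, dis23⟩),
    Finset.card_union_of_disjoint dis12,
    pe_card h2 d1, pe_card h2 d2, pe_card h2 d3]
  omega

end TPB4

namespace TPB5
open TPB TPB2 TPB3 TPB4
variable {n : ℕ}

lemma three_torsion [NeZero n] {h : ZMod n} (hh : h ≠ 0) (h3 : h + h + h = 0) :
    ∃ k : ℕ, n = 3 * k ∧ dstar n h = k ∧
      (h = (k : ZMod n) ∨ h = ((2 * k : ℕ) : ZMod n)) := by
  have hv := ZMod.val_lt h
  have hv0 : h.val ≠ 0 := fun hq => hh ((ZMod.val_eq_zero _).mp hq)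
  have hdvd : ((3 * h.val : ℕ) : ZMod n) = 0 := by
    push_cast [ZMod.natCast_zmod_val]
    linear_combination h3
  rw [ZMod.natCast_eq_zero_iff] at hdvd
  obtain ⟨c, hc⟩ := hdvd
  have hn0 : 0 < n := Nat.pos_of_ne_zero (NeZero.ne n)
  have hc0 : c ≠ 0 := by rintro rfl; omega
  have hc3 : c < 3 := by nlinarith
  have hc12 : c = 1 ∨ c = 2 := by omega
  rcases hc12 with rfl | rfl
  · refine ⟨h.val, by omega, by rw [dstar]; omega, Or.inl (ZMod.natCast_zmod_val h).symm⟩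
  · obtain ⟨k, hk1, hk2⟩ : ∃ k, n = 3 * k ∧ h.val = 2 * k := ⟨h.val / 2, by omega, by omega⟩
    refine ⟨k, hk1, by rw [dstar]; omega, Or.inr ?_⟩
    rw [← hk2]
    exact (ZMod.natCast_zmod_val h).symm

lemma cover_univ [NeZero n] {Δ k : ℕ} (hk : n = 3 * k) (hkΔ : k ≤ Δ) (hΔn : Δ < n) (a : ZMod n) :
    arc Δ a ∪ arc Δ (a + ((k : ℕ) : ZMod n)) ∪ arc Δ (a + ((2 * k : ℕ) : ZMod n))
      = Finset.univ := by
  apply Finset.eq_univ_of_forall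
  intro z
  obtain ⟨r, hrval, hz⟩ : ∃ r : ℕ, (z - a).val = r ∧ z = a + (r : ZMod n) :=
    ⟨(z - a).val, rfl, by rw [ZMod.natCast_zmod_val]; ring⟩
  have hr : r < n := hrval ▸ ZMod.val_lt (z - a)
  simp only [Finset.mem_union]
  rcases lt_or_ge r k with h1 | h1
  · left; left
    rw [mem_arc_iff_val hΔn, hrval]
    omega
  · rcases lt_or_ge r (2 * k) with hlt | hge
    · left; right
      rw [mem_arc_iff_val hΔn]
      have e : z - (a + ((k : ℕ) : ZMod n)) = ((r - k : ℕ) : ZMod n) := by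
        rw [Nat.cast_sub h1, hz]; ring
      rw [e, ZMod.val_natCast_of_lt (by omega)]
      omega
    · right
      rw [mem_arc_iff_val hΔn]
      have e : z - (a + ((2 * k : ℕ) : ZMod n)) = ((r - 2 * k : ℕ) : ZMod n) := by
        rw [Nat.cast_sub hge, hz]; ring
      rw [e, ZMod.val_natCast_of_lt (by omega)]
      omega

lemma threeAP_card [NeZero n] {Δ : ℕ} (h2 : 2 * (Δ + 1) ≤ n) {h : ZMod n}
    (hh : h ≠ 0) (h3 : h + h + h = 0) (a : ZMod n) :
    (min (3 * (Δ + 1)) n ≤ (EF Δ ({a, a + h, a + h + h} : Finset (ZMod n))).card) ∧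
    EF Δ ({a, a + h, a + h + h} : Finset (ZMod n)) ⊆ cls (((n / 3 : ℕ) : ZMod n)) := by
  have h2h : h + h ≠ 0 := by
    intro hq
    exact hh (by linear_combination h3 - hq)
  obtain ⟨k, hk, hdk, hcast⟩ := three_torsion hh h3
  have hk3 : k = n / 3 := by omega
  have hab : a ≠ a + h := fun hq => hh (by linear_combination -hq)
  have hac : a ≠ a + h + h := fun hq => h2h (by linear_combination -hq)
  have hbc : a + h ≠ a + h + h := fun hq => hh (by linear_combination -hq)
  have hEF : EF Δ ({a, a + h, a + h + h} : Finset (ZMod n))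
      = pe Δ a h ∪ pe Δ (a + h) h ∪ pe Δ a (h + h) := by
    rw [EF_triple hab hac hbc]
    have e1 : a + h - a = h := by ring
    have e2 : a + h + h - (a + h) = h := by ring
    have e3 : a + h + h - a = h + h := by ring
    rw [e1, e2, e3]
  have hclsh : cls (h + h) = cls h := by
    have e : h + h = -h := by linear_combination h3
    rw [e, cls_neg]
  have hclsk : cls h = cls (((n / 3 : ℕ) : ZMod n)) := by
    rw [← hk3]
    rcases hcast with he | he
    · rw [← he]
    · have hz3 : ((2 * k : ℕ) : ZMod n) + ((k : ℕ) : ZMod n) = 0 := by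
        have e : ((2 * k : ℕ) : ZMod n) + ((k : ℕ) : ZMod n) = ((3 * k : ℕ) : ZMod n) := by
          push_cast; ring
        rw [e, ← hk, ZMod.natCast_self]
      have e2k : ((2 * k : ℕ) : ZMod n) = -((k : ℕ) : ZMod n) :=
        eq_neg_of_add_eq_zero_left hz3
      rw [he, e2k, cls_neg]
  constructor
  · have hpe3 : pe Δ a (h + h) = pe Δ (a + h + h) h := by
      ext e
      rw [mem_pe, mem_pe]
      have e4 : a + h + h + h = a := by linear_combination h3
      have e5 : a + (h + h) = a + h + h := by ring
      constructor
      · rintro ⟨τ, hτ, rfl⟩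
        exact ⟨τ, hτ, by rw [e4, e5]; exact Sym2.eq_swap⟩
      · rintro ⟨τ, hτ, rfl⟩
        exact ⟨τ, hτ, by rw [e4, e5]; exact Sym2.eq_swap⟩
    have himg : pe Δ a h ∪ pe Δ (a + h) h ∪ pe Δ a (h + h)
        = (arc Δ a ∪ arc Δ (a + h) ∪ arc Δ (a + h + h)).image (fun x => s(x, x + h)) := by
      rw [hpe3, pe, pe, pe, Finset.image_union, Finset.image_union]
    rw [hEF, himg, Finset.card_image_of_injective _ (phi_inj h2h)]
    rcases le_or_gt (Δ + 1) k with hmk | hkm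
    · have hd1 : dstar n (a + h - a) = k := by rw [add_sub_cancel_left]; exact hdk
      have hd2 : dstar n (a + h + h - (a + h)) = k := by
        have e : a + h + h - (a + h) = h := by ring
        rw [e]; exact hdk
      have hd3 : dstar n (a + h + h - a) = k := by
        have e : a + h + h - a = h + h := by ring
        have e2 : h + h = -h := by linear_combination h3
        rw [e, e2, dstar_neg hh]; exact hdk
      have dis12 := arc_disjoint h2 hab (by omega)
      have dis13 := arc_disjoint h2 hac (by omega)
      have dis23 := arc_disjoint h2 hbc (by omega)
      rw [Finset.card_union_of_disjoint (Finset.disjoint_union_left.mpr ⟨dis13, dis23⟩),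
        Finset.card_union_of_disjoint dis12, card_arc (by omega), card_arc (by omega),
        card_arc (by omega)]
      omega
    · rcases hcast with he | he
      · have s1 : a + h = a + ((k : ℕ) : ZMod n) := by rw [he]
        have s2 : a + h + h = a + ((2 * k : ℕ) : ZMod n) := by rw [he]; push_cast; ring
        rw [s2, s1, cover_univ hk (by omega) (by omega) a, Finset.card_univ, ZMod.card]
        omega
      · have s1 : a + h = a + ((2 * k : ℕ) : ZMod n) := by rw [he]
        have hz3 : ((2 * k : ℕ) : ZMod n) + ((k : ℕ) : ZMod n) = 0 := by
          have e : ((2 * k : ℕ) : ZMod n) + ((k : ℕ) : ZMod n) = ((3 * k : ℕ) : ZMod n) := by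
            push_cast; ring
          rw [e, ← hk, ZMod.natCast_self]
        have hz4 : ((3 * k : ℕ) : ZMod n) = 0 := by rw [← hk]; exact ZMod.natCast_self n
        have s2 : a + h + h = a + ((k : ℕ) : ZMod n) := by
          push_cast at hz4
          rw [he]; push_cast
          linear_combination hz4
        rw [s2, s1, Finset.union_right_comm, cover_univ hk (by omega) (by omega) a,
          Finset.card_univ, ZMod.card]
        omega
  · rw [hEF, ← hclsk]
    refine Finset.union_subset (Finset.union_subset ?_ ?_) ?_
    · exact pe_subset_cls a h
    · exact pe_subset_cls (a + h) h
    · rw [← hclsh]; exact pe_subset_cls a (h + h)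

end TPB5

namespace TPB6
open TPB TPB2 TPB3 TPB4 TPB5

abbrev ap3 (n : ℕ) (A : Finset (ZMod n)) : Prop :=
  ∃ x h : ZMod n, h ≠ 0 ∧ h + h + h = 0 ∧ A = {x, x + h, x + h + h}

abbrev apg (n g : ℕ) (A : Finset (ZMod n)) : Prop :=
  ∃ x : ZMod n, A = {x, x + (g : ZMod n), x + (g : ZMod n) + (g : ZMod n)}

end TPB6

set_option maxHeartbeats 2000000 in
open TPB TPB2 TPB3 TPB4 TPB5 TPB6 in
/-- Upper bound on the size of any `(3,Δ)`-packing of `K_n`: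
`|P| < n(n-1)/(6(Δ+1)) + ((2 ln 2 - 1)/3) n + n/(3(Δ+1))`. -/
theorem three_packing_upper_bound (n Δ : ℕ) (hn : 0 < n) (hΔ0 : 0 < Δ)
    (hΔ : Δ < n / 2) (P : Finset (Finset (ZMod n))) (hP : IsPacking n 3 Δ P) :
    (P.card : ℝ) < (n : ℝ) * ((n : ℝ) - 1) / (6 * ((Δ : ℝ) + 1)) +
      ((2 * Real.log 2 - 1) / 3) * (n : ℝ) + (n : ℝ) / (3 * ((Δ : ℝ) + 1)) := by
  haveI : NeZero n := ⟨hn.ne'⟩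
  classical
  have h2 : 2 * (Δ + 1) ≤ n := by omega
  -- STEP 1: the per-triple "charge" inequality
  have master : ∀ A ∈ P,
      3 * (Δ + 1) - (EF Δ A).card ≤
        (∑ g ∈ Finset.Icc 1 Δ, (Δ + 1 - g) * (if apg n g A then 1 else 0)) +
        (if ap3 n A then 3 * (Δ + 1) - (EF Δ A).card else 0) := by
    intro A hA
    have hA3 : A.card = 3 := hP.1 A hA
    by_cases h3c : ap3 n A
    · rw [if_pos h3c]
      exact Nat.le_add_left _ _
    · rw [if_neg h3c, add_zero]
      by_cases hAP : ∃ (x h : ZMod n), h ≠ 0 ∧ A = {x, x + h, x + h + h}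
      · obtain ⟨x, h, hh, hAx⟩ := hAP
        have h2h : h + h ≠ 0 := by
          intro hq
          have e : x + h + h = x := by linear_combination hq
          rw [hAx, e] at hA3
          have he2 : ({x, x + h, x} : Finset (ZMod n)) = {x, x + h} := by
            ext z
            simp only [Finset.mem_insert, Finset.mem_singleton]
            tauto
          rw [he2] at hA3
          have hle : ({x, x + h} : Finset (ZMod n)).card ≤ 2 :=
            le_trans (Finset.card_insert_le _ _) (by simp)
          omega
        have h3h : h + h + h ≠ 0 := fun hq => h3c ⟨x, h, hh, hq, hAx⟩
        have htot := ap_total_card h2 hh h2h h3h x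
        rw [← hAx] at htot
        by_cases hclose : dstar n h ≤ Δ
        · have hvlt := ZMod.val_lt h
          have hv0 : h.val ≠ 0 := fun hq => hh ((ZMod.val_eq_zero _).mp hq)
          have hg1 : 1 ≤ dstar n h := by rw [dstar]; omega
          have hmem : dstar n h ∈ Finset.Icc 1 Δ := Finset.mem_Icc.mpr ⟨hg1, hclose⟩
          have happ : apg n (dstar n h) A := by
            rcases le_or_gt h.val (n - h.val) with hle | hlt
            · have he : h = ((dstar n h : ℕ) : ZMod n) := by
                rw [dstar, min_eq_left hle, ZMod.natCast_zmod_val]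
              exact ⟨x, by rw [hAx, ← he]⟩
            · haveI : NeZero h := ⟨hh⟩
              have hnegval : (-h).val = n - h.val := ZMod.val_neg_of_ne_zero h
              have he : -h = ((dstar n h : ℕ) : ZMod n) := by
                rw [dstar, min_eq_right (le_of_lt hlt), ← hnegval, ZMod.natCast_zmod_val]
              refine ⟨x + h + h, ?_⟩
              rw [hAx]
              have e3 : x + h + h + ((dstar n h : ℕ) : ZMod n) + ((dstar n h : ℕ) : ZMod n)
                  = x := by rw [← he]; ring
              have e2 : x + h + h + ((dstar n h : ℕ) : ZMod n) = x + h := by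
                rw [← he]; ring
              rw [e3, e2]
              ext z
              simp only [Finset.mem_insert, Finset.mem_singleton]
              tauto
          have hsingle : (Δ + 1 - dstar n h) * 1 ≤
              ∑ g ∈ Finset.Icc 1 Δ, (Δ + 1 - g) * (if apg n g A then 1 else 0) := by
            have hs := Finset.single_le_sum
              (f := fun g => (Δ + 1 - g) * (if apg n g A then 1 else 0))
              (fun i _ => Nat.zero_le _) hmem
            have hs' : (Δ + 1 - dstar n h) * (if apg n (dstar n h) A then 1 else 0) ≤
                ∑ g ∈ Finset.Icc 1 Δ, (Δ + 1 - g) * (if apg n g A then 1 else 0) := hs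
            rwa [if_pos happ] at hs'
          calc 3 * (Δ + 1) - (EF Δ A).card ≤ (Δ + 1 - dstar n h) * 1 := by omega
            _ ≤ _ := hsingle
        · omega
      · push_neg at hAP
        obtain ⟨a, b, c, hab, hac, hbc, rfl⟩ := Finset.card_eq_three.mp hA3
        have d1 : b - a ≠ 0 := sub_ne_zero.mpr (Ne.symm hab)
        have d2 : c - b ≠ 0 := sub_ne_zero.mpr (Ne.symm hbc)
        have hd3 : a - c ≠ 0 := sub_ne_zero.mpr hac
        have c12 : b - a ≠ c - b := by
          intro hq
          refine hAP a (b - a) d1 ?_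
          have e2 : a + (b - a) + (b - a) = c := by linear_combination hq
          have e1 : a + (b - a) = b := by ring
          rw [e2, e1]
        have c12' : b - a ≠ -(c - b) := fun hq => hac (by linear_combination -hq)
        have c13 : b - a ≠ c - a := fun hq => hbc (by linear_combination hq)
        have c13' : b - a ≠ -(c - a) := by
          intro hq
          refine hAP c (a - c) hd3 ?_
          have e2 : c + (a - c) + (a - c) = b := by linear_combination -hq
          have e1 : c + (a - c) = a := by ring
          rw [e2, e1]
          ext z
          simp only [Finset.mem_insert, Finset.mem_singleton]
          tauto
        have c23 : c - b ≠ c - a := fun hq => hab (by linear_combination hq)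
        have c23' : c - b ≠ -(c - a) := by
          intro hq
          refine hAP b (c - b) d2 ?_
          have e2 : b + (c - b) + (c - b) = a := by linear_combination hq
          have e1 : b + (c - b) = c := by ring
          rw [e2, e1]
          ext z
          simp only [Finset.mem_insert, Finset.mem_singleton]
          tauto
        have hgen := generic_card h2 hab hac hbc c12 c12' c13 c13' c23 c23'
        omega
  -- STEP 2: sum the per-triple inequality
  have sumchg : ∑ A ∈ P, (3 * (Δ + 1) - (EF Δ A).card) ≤
      (∑ g ∈ Finset.Icc 1 Δ, (Δ + 1 - g) * (P.filter (apg n g)).card) + (3 * (Δ + 1) - n) := by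
    have step := Finset.sum_le_sum master
    rw [Finset.sum_add_distrib] at step
    have e1 : ∑ A ∈ P, ∑ g ∈ Finset.Icc 1 Δ, (Δ + 1 - g) * (if apg n g A then 1 else 0)
        = ∑ g ∈ Finset.Icc 1 Δ, (Δ + 1 - g) * (P.filter (apg n g)).card := by
      rw [Finset.sum_comm]
      refine Finset.sum_congr rfl fun g _ => ?_
      have eA : ∀ A ∈ P, (Δ + 1 - g) * (if apg n g A then 1 else 0)
          = (if apg n g A then (Δ + 1 - g) else 0) := by
        intro A _
        split_ifs <;> simp
      rw [Finset.sum_congr rfl eA, ← Finset.sum_filter, Finset.sum_const, smul_eq_mul, mul_comm]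
    have e2 : ∑ A ∈ P, (if ap3 n A then 3 * (Δ + 1) - (EF Δ A).card else 0)
        = ∑ A ∈ P.filter (ap3 n), (3 * (Δ + 1) - (EF Δ A).card) :=
      (Finset.sum_filter _ _).symm
    have e3 : ∑ A ∈ P.filter (ap3 n), (3 * (Δ + 1) - (EF Δ A).card) ≤ 3 * (Δ + 1) - n := by
      by_cases hbig : 3 * (Δ + 1) ≤ n
      · have hz : ∀ A ∈ P.filter (ap3 n), 3 * (Δ + 1) - (EF Δ A).card = 0 := by
          intro A hA'
          rw [Finset.mem_filter] at hA'
          obtain ⟨hAp, x, h, hh, hq3, hAx⟩ := hA'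
          have hcA := (threeAP_card h2 hh hq3 x).1
          rw [← hAx] at hcA
          omega
        rw [Finset.sum_congr rfl hz, Finset.sum_const, smul_zero]
        exact Nat.zero_le _
      · push_neg at hbig
        have hone : (P.filter (ap3 n)).card ≤ 1 := by
          rw [Finset.card_le_one]
          intro A hA' B hB'
          rw [Finset.mem_filter] at hA' hB'
          obtain ⟨hAp, x, h, hh, hq3, hAx⟩ := hA'
          obtain ⟨hBp, y, h', hh', hq3', hBx⟩ := hB'
          by_contra hne
          have hdisj := EF_disjoint (Δ := Δ) (hP.2 A hAp B hBp hne)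
          have hcA := threeAP_card h2 hh hq3 x
          have hcB := threeAP_card h2 hh' hq3' y
          rw [← hAx] at hcA
          rw [← hBx] at hcB
          have hcu := Finset.card_union_of_disjoint hdisj
          have hsub : EF Δ A ∪ EF Δ B ⊆ cls (((n / 3 : ℕ) : ZMod n)) :=
            Finset.union_subset hcA.2 hcB.2
          have h5 := Finset.card_le_card hsub
          have h6 := cls_card_le (((n / 3 : ℕ) : ZMod n))
          have h7 := hcA.1
          have h8 := hcB.1
          omega
        have heach : ∀ A ∈ P.filter (ap3 n), 3 * (Δ + 1) - (EF Δ A).card ≤ 3 * (Δ + 1) - n := by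
          intro A hA'
          rw [Finset.mem_filter] at hA'
          obtain ⟨hAp, x, h, hh, hq3, hAx⟩ := hA'
          have hcA := (threeAP_card h2 hh hq3 x).1
          rw [← hAx] at hcA
          omega
        calc ∑ A ∈ P.filter (ap3 n), (3 * (Δ + 1) - (EF Δ A).card)
            ≤ ∑ _A ∈ P.filter (ap3 n), (3 * (Δ + 1) - n) := Finset.sum_le_sum heach
          _ = (P.filter (ap3 n)).card * (3 * (Δ + 1) - n) := by
              rw [Finset.sum_const, smul_eq_mul]
          _ ≤ 1 * (3 * (Δ + 1) - n) := Nat.mul_le_mul_right _ hone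
          _ = 3 * (Δ + 1) - n := one_mul _
    rw [e1, e2] at step
    omega
  -- STEP 3: the per-class budget
  have budget : ∀ g ∈ Finset.Icc 1 Δ, (P.filter (apg n g)).card * (Δ + 1 + g) ≤ n := by
    intro g hg
    rw [Finset.mem_Icc] at hg
    have key : ∀ A ∈ P.filter (apg n g),
        Δ + 1 + g ≤ ((EF Δ A) ∩ cls ((g : ZMod n))).card := by
      intro A hA'
      rw [Finset.mem_filter] at hA'
      obtain ⟨hAp, x, hAx⟩ := hA'
      have hb := budget_card h2 hg.1 hg.2 x
      rw [← hAx] at hb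
      exact hb
    have hdisj : ∀ A ∈ P.filter (apg n g), ∀ B ∈ P.filter (apg n g), A ≠ B →
        Disjoint ((EF Δ A) ∩ cls ((g : ZMod n))) ((EF Δ B) ∩ cls ((g : ZMod n))) := by
      intro A hA' B hB' hne
      rw [Finset.mem_filter] at hA' hB'
      have hd := EF_disjoint (Δ := Δ) (hP.2 A hA'.1 B hB'.1 hne)
      exact Finset.disjoint_of_subset_left Finset.inter_subset_left
        (Finset.disjoint_of_subset_right Finset.inter_subset_left hd)
    calc (P.filter (apg n g)).card * (Δ + 1 + g)
        ≤ ∑ A ∈ P.filter (apg n g), ((EF Δ A) ∩ cls ((g : ZMod n))).card := by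
          have hs := Finset.card_nsmul_le_sum (P.filter (apg n g))
            (fun A => ((EF Δ A) ∩ cls ((g : ZMod n))).card) (Δ + 1 + g) key
          rwa [smul_eq_mul] at hs
      _ = ((P.filter (apg n g)).biUnion (fun A => (EF Δ A) ∩ cls ((g : ZMod n)))).card :=
          (Finset.card_biUnion hdisj).symm
      _ ≤ (cls ((g : ZMod n))).card := Finset.card_le_card
          (Finset.biUnion_subset.mpr fun A _ => Finset.inter_subset_right)
      _ ≤ n := cls_card_le _
  -- STEP 4: total number of available edges
  have total : ∑ A ∈ P, (EF Δ A).card ≤ n.choose 2 := by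
    have hdisj : ∀ A ∈ P, ∀ B ∈ P, A ≠ B → Disjoint (EF Δ A) (EF Δ B) :=
      fun A hA B hB hne => EF_disjoint (hP.2 A hA B hB hne)
    calc ∑ A ∈ P, (EF Δ A).card = (P.biUnion (fun A => EF Δ A)).card :=
        (Finset.card_biUnion hdisj).symm
      _ ≤ (Finset.univ.filter (fun e : Sym2 (ZMod n) => ¬ e.IsDiag)).card :=
        Finset.card_le_card (Finset.biUnion_subset.mpr fun A _ => EF_nondiag)
      _ = n.choose 2 := by
        rw [← Fintype.card_subtype, Sym2.card_subtype_not_diag, ZMod.card]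
  -- STEP 5: master counting inequality over ℕ
  have mainN : 3 * (Δ + 1) * P.card ≤
      n.choose 2 + (∑ g ∈ Finset.Icc 1 Δ, (Δ + 1 - g) * (n / (Δ + 1 + g)))
        + (3 * (Δ + 1) - n) := by
    have step1 : 3 * (Δ + 1) * P.card ≤
        ∑ A ∈ P, ((EF Δ A).card + (3 * (Δ + 1) - (EF Δ A).card)) := by
      rw [mul_comm]
      calc P.card * (3 * (Δ + 1)) = ∑ _A ∈ P, 3 * (Δ + 1) := by
            rw [Finset.sum_const, smul_eq_mul]
        _ ≤ _ := Finset.sum_le_sum fun A _ => by omega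
    rw [Finset.sum_add_distrib] at step1
    have step2 : ∑ g ∈ Finset.Icc 1 Δ, (Δ + 1 - g) * (P.filter (apg n g)).card ≤
        ∑ g ∈ Finset.Icc 1 Δ, (Δ + 1 - g) * (n / (Δ + 1 + g)) := by
      refine Finset.sum_le_sum fun g hg => ?_
      refine Nat.mul_le_mul_left _ ?_
      rw [Nat.le_div_iff_mul_le (by omega)]
      exact budget g hg
    omega
  -- STEP 6: pass to ℝ
  set L := Real.log 2 with hL
  set M : ℝ := (Δ : ℝ) + 1 with hM
  have hΔ0R : (0:ℝ) ≤ (Δ : ℝ) := Nat.cast_nonneg Δ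
  have hM1 : (1:ℝ) ≤ M := by rw [hM]; linarith
  have hM0 : (0:ℝ) < M := by linarith
  have hnM : 2 * M ≤ (n:ℝ) := by
    have hc : ((2 * (Δ + 1) : ℕ) : ℝ) ≤ (n:ℝ) := Nat.cast_le.mpr h2
    push_cast at hc
    rw [hM]; linarith
  -- harmonic sum bound
  have harm : ∑ g ∈ Finset.Icc 1 Δ, (1:ℝ) / (M + g) ≤ L - 1 / (2 * M) := by
    have hstep : ∀ g ∈ Finset.Icc 1 Δ,
        (1:ℝ) / (M + g) ≤ Real.log (M + g) - Real.log (M + g - 1) := by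
      intro g hg
      rw [Finset.mem_Icc] at hg
      have hg1 : (1:ℝ) ≤ (g:ℝ) := by exact_mod_cast hg.1
      have hp1 : (0:ℝ) < M + g - 1 := by linarith
      have hp2 : (0:ℝ) < M + g := by linarith
      have hlog := Real.log_le_sub_one_of_pos (x := (M + (g:ℝ) - 1) / (M + g)) (by positivity)
      rw [Real.log_div (by linarith) (by linarith)] at hlog
      have he : (M + (g:ℝ) - 1) / (M + g) - 1 = -(1 / (M + g)) := by
        field_simp
        ring
      rw [he] at hlog
      linarith
    have htel : ∑ g ∈ Finset.Icc 1 Δ, (Real.log (M + g) - Real.log (M + g - 1))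
        = Real.log (M + Δ) - Real.log M := by
      have hIcc : Finset.Icc 1 Δ = Finset.Ico 1 (Δ + 1) := by rw [Finset.Ico_add_one_right_eq_Icc]
      rw [hIcc, Finset.sum_Ico_eq_sum_range]
      have hrw : ∀ i ∈ Finset.range (Δ + 1 - 1),
          Real.log (M + ((1 + i : ℕ) : ℝ)) - Real.log (M + ((1 + i : ℕ) : ℝ) - 1)
          = Real.log (M + ((i + 1 : ℕ) : ℝ)) - Real.log (M + ((i : ℕ) : ℝ)) := by
        intro i _
        have a1 : M + ((1 + i : ℕ) : ℝ) = M + ((i + 1 : ℕ) : ℝ) := by push_cast; ring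
        have a2 : M + ((1 + i : ℕ) : ℝ) - 1 = M + ((i : ℕ) : ℝ) := by push_cast; ring
        rw [a2, a1]
      rw [Finset.sum_congr rfl hrw]
      have hsr := Finset.sum_range_sub (f := fun i : ℕ => Real.log (M + (i : ℝ))) Δ
      simp only [Nat.add_sub_cancel]
      simp only [Nat.cast_zero, add_zero] at hsr
      exact hsr
    have hsum := Finset.sum_le_sum hstep
    rw [htel] at hsum
    have hMD : M + (Δ : ℝ) = 2 * M - 1 := by rw [hM]; ring
    rw [hMD] at hsum
    have h2M1 : (0:ℝ) < 2 * M - 1 := by linarith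
    have hlog := Real.log_le_sub_one_of_pos (x := (2 * M - 1) / (2 * M)) (by positivity)
    rw [Real.log_div (by linarith) (by linarith)] at hlog
    have he : (2 * M - 1) / (2 * M) - 1 = -(1 / (2 * M)) := by field_simp; ring
    rw [he] at hlog
    have hlogmul : Real.log (2 * M) = L + Real.log M := by
      rw [hL, ← Real.log_mul (by norm_num) (ne_of_gt hM0)]
    linarith
  -- the key analytic estimate
  have key : ∑ g ∈ Finset.Icc 1 Δ, (M - (g:ℝ)) / (M + g) ≤ (2 * L - 1) * M := by
    have hterm : ∀ g ∈ Finset.Icc 1 Δ,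
        (M - (g:ℝ)) / (M + g) = 2 * M * (1 / (M + g)) - 1 := by
      intro g hg
      rw [Finset.mem_Icc] at hg
      have hg1 : (1:ℝ) ≤ (g:ℝ) := by exact_mod_cast hg.1
      have hp : (0:ℝ) < M + g := by linarith
      field_simp
      ring
    rw [Finset.sum_congr rfl hterm, Finset.sum_sub_distrib, ← Finset.mul_sum,
      Finset.sum_const, Nat.card_Icc]
    simp only [Nat.add_sub_cancel, nsmul_eq_mul, mul_one]
    have hmul : 2 * M * (∑ g ∈ Finset.Icc 1 Δ, 1 / (M + (g:ℝ))) ≤ 2 * M * (L - 1 / (2 * M)) :=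
      mul_le_mul_of_nonneg_left harm (by linarith)
    have hsimp : 2 * M * (L - 1 / (2 * M)) = 2 * M * L - 1 := by
      field_simp
    rw [hsimp] at hmul
    have hMd : (Δ : ℝ) = M - 1 := by rw [hM]; ring
    rw [hMd]
    linarith
  -- cast mainN to reals and combine
  have hcast : 3 * M * (P.card : ℝ) ≤
      (n:ℝ) * ((n:ℝ) - 1) / 2 + (n:ℝ) * ((2 * L - 1) * M) + M := by
    have c0 : ((3 * (Δ + 1) * P.card : ℕ) : ℝ) ≤
        ((n.choose 2 : ℕ) : ℝ) +
        ((∑ g ∈ Finset.Icc 1 Δ, (Δ + 1 - g) * (n / (Δ + 1 + g)) : ℕ) : ℝ) +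
        ((3 * (Δ + 1) - n : ℕ) : ℝ) := by
      have hc := (Nat.cast_le (α := ℝ)).mpr mainN
      rw [Nat.cast_add, Nat.cast_add] at hc
      exact hc
    have c2a : ((∑ g ∈ Finset.Icc 1 Δ, (Δ + 1 - g) * (n / (Δ + 1 + g)) : ℕ) : ℝ)
        ≤ (n:ℝ) * ∑ g ∈ Finset.Icc 1 Δ, (M - (g:ℝ)) / (M + g) := by
      rw [Nat.cast_sum, Finset.mul_sum]
      refine Finset.sum_le_sum fun g hg => ?_
      rw [Finset.mem_Icc] at hg
      rw [Nat.cast_mul]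
      have d1 : ((Δ + 1 - g : ℕ) : ℝ) = M - (g:ℝ) := by
        rw [Nat.cast_sub (by omega)]
        push_cast
        rw [hM]
      have d2 : ((n / (Δ + 1 + g) : ℕ) : ℝ) ≤ (n:ℝ) / (M + (g:ℝ)) := by
        have hle := Nat.cast_div_le (m := n) (n := Δ + 1 + g) (α := ℝ)
        have e : ((Δ + 1 + g : ℕ) : ℝ) = M + (g:ℝ) := by push_cast; rw [hM]
        rwa [e] at hle
      have hgΔ : (g:ℝ) ≤ (Δ:ℝ) := by exact_mod_cast hg.2
      have hMg : (0:ℝ) ≤ M - (g:ℝ) := by rw [hM]; linarith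
      calc ((Δ + 1 - g : ℕ) : ℝ) * ((n / (Δ + 1 + g) : ℕ) : ℝ)
          ≤ (M - (g:ℝ)) * ((n:ℝ) / (M + (g:ℝ))) := by
            rw [d1]
            exact mul_le_mul_of_nonneg_left d2 hMg
        _ = (n:ℝ) * ((M - (g:ℝ)) / (M + (g:ℝ))) := by ring
    have c3 : ((3 * (Δ + 1) - n : ℕ) : ℝ) ≤ M := by
      have hle : (3 * (Δ + 1) - n : ℕ) ≤ Δ + 1 := by omega
      have hcc := (Nat.cast_le (α := ℝ)).mpr hle
      rw [hM]
      push_cast at hcc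
      linarith
    have ckey : (n:ℝ) * (∑ g ∈ Finset.Icc 1 Δ, (M - (g:ℝ)) / (M + g)) ≤
        (n:ℝ) * ((2 * L - 1) * M) :=
      mul_le_mul_of_nonneg_left key (Nat.cast_nonneg n)
    have l1 : ((3 * (Δ + 1) * P.card : ℕ) : ℝ) = 3 * M * (P.card : ℝ) := by
      push_cast
      rw [hM]
    rw [l1, Nat.cast_choose_two] at c0
    linarith
  -- final strict comparison
  have hstrict : 3 * M * (P.card : ℝ) <
      (n:ℝ) * ((n:ℝ) - 1) / 2 + (n:ℝ) * ((2 * L - 1) * M) + (n:ℝ) := by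
    have : M + 1 ≤ (n:ℝ) := by linarith
    linarith
  have h3M : (0:ℝ) < 3 * M := by linarith
  have hT : (n:ℝ) * ((n:ℝ) - 1) / (6 * M) + (2 * L - 1) / 3 * (n:ℝ) + (n:ℝ) / (3 * M)
      = ((n:ℝ) * ((n:ℝ) - 1) / 2 + (n:ℝ) * ((2 * L - 1) * M) + (n:ℝ)) / (3 * M) := by
    field_simp
    ring
  rw [hT, lt_div_iff₀ h3M]
  calc (P.card : ℝ) * (3 * M) = 3 * M * (P.card : ℝ) := by ring
    _ < _ := hstrict
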